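/- Let (Ω, F, P, T) be a measure preserving system, and suppose there exist a constant C* > 0 and a sequence of events (U_n) with nP(U_n) → τ > 0 such that P(U_n ∩ T^{-j}U_n) ≤ P(U_n)² + C*·P(U_n)·j^{-2} for all j, n ≥ 1. Suppose moreover U_n ∩ T^{-j}U_n = ∅ for 1 ≤ j < R_n where R_n → ∞. Then for any sequence k_n → ∞, lim_{n→∞} n Σ_{j=1}^{⌊n/k_n⌋} P(U_n ∩ T^{-j}U_n) = 0. -/

import Mathlib

/-!
The terms with `j < R_n` vanish, and each remaining term is at most `P(U_n)² + C* P(U_n) / j²`.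
Summing over `j ≤ n / k_n` and using `∑_{j ≥ R_n} j⁻² ≤ 2 / R_n`, the D′ sum is at most
`(n P(U_n))² / k_n + 2 C* (n P(U_n)) / R_n`, which tends to `0` since `n P(U_n)` is bounded
while `k_n, R_n → ∞`.
-/

open Filter MeasureTheory Finset

lemma sum_Icc_inv_sq_le {r : ℕ} (hr : 1 ≤ r) (m : ℕ) :
    ∑ j ∈ Icc r m, ((j : ℝ) ^ 2)⁻¹ ≤ 2 / r := by
  have hsub : Icc r m ⊆ Ioo (r - 1) (m + 1) := fun j hj => by
    simp only [mem_Icc, mem_Ioo] at hj ⊢; omega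
  calc ∑ j ∈ Icc r m, ((j : ℝ) ^ 2)⁻¹
      ≤ ∑ j ∈ Ioo (r - 1) (m + 1), ((j : ℝ) ^ 2)⁻¹ :=
        sum_le_sum_of_subset_of_nonneg hsub fun _ _ _ => by positivity
    _ ≤ 2 / ((r - 1 : ℕ) + 1 : ℝ) := sum_Ioo_inv_sq_le _ _
    _ = 2 / r := by rw [Nat.cast_sub hr, Nat.cast_one, sub_add_cancel]

lemma sum_Icc_le_of_eq_zero_of_le_add_div_sq (a : ℕ → ℝ) {q C : ℝ} (hq : 0 ≤ q) (hC : 0 ≤ C)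
    {r : ℕ} (hr : 1 ≤ r) (hzero : ∀ j, 1 ≤ j → j < r → a j = 0)
    (hle : ∀ j, 1 ≤ j → a j ≤ q + C / (j : ℝ) ^ 2) (m : ℕ) :
    ∑ j ∈ Icc 1 m, a j ≤ m * q + 2 * C / r := by
  have hsub : Icc r m ⊆ Icc 1 m := Icc_subset_Icc_left hr
  rw [← sum_subset hsub fun j hj hj' => by
    simp only [mem_Icc] at hj hj'; exact hzero j hj.1 (by omega)]
  calc ∑ j ∈ Icc r m, a j
      ≤ ∑ j ∈ Icc r m, (q + C * ((j : ℝ) ^ 2)⁻¹) :=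
        sum_le_sum fun j hj => by
          rw [← div_eq_mul_inv]; exact hle j (hr.trans (mem_Icc.mp hj).1)
    _ = #(Icc r m) * q + C * ∑ j ∈ Icc r m, ((j : ℝ) ^ 2)⁻¹ := by
        rw [sum_add_distrib, sum_const, nsmul_eq_mul, mul_sum]
    _ ≤ m * q + C * (2 / r) := by
        gcongr
        · exact_mod_cast (card_le_card hsub).trans (by simp)
        · exact sum_Icc_inv_sq_le hr m
    _ = m * q + 2 * C / r := by ring

theorem Dprime_holds_of_decay_general
    {Ω : Type*} [MeasurableSpace Ω] (P : Measure Ω) [IsProbabilityMeasure P]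
    (T : Ω → Ω)
    (Cstar τ : ℝ) (hC : 0 < Cstar)
    (U : ℕ → Set Ω)
    (hna : Tendsto (fun n : ℕ => (n : ℝ) * (P (U n)).toReal) atTop (nhds τ))
    (hcorr : ∀ n j : ℕ, 1 ≤ j →
      (P (U n ∩ T^[j] ⁻¹' U n)).toReal
        ≤ (P (U n)).toReal ^ 2 + Cstar * (P (U n)).toReal / (j : ℝ) ^ 2)
    (R : ℕ → ℕ) (hR : Tendsto R atTop atTop)
    (hdisj : ∀ n j : ℕ, 1 ≤ j → j < R n → U n ∩ T^[j] ⁻¹' U n = ∅)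
    (k : ℕ → ℕ) (hk : Tendsto k atTop atTop) :
    Tendsto (fun n : ℕ =>
        (n : ℝ) * ∑ j ∈ Finset.Icc 1 (n / k n), (P (U n ∩ T^[j] ⁻¹' U n)).toReal)
      atTop (nhds 0) := by
  set p : ℕ → ℝ := fun n => (P (U n)).toReal
  set r : ℕ → ℕ := fun n => max (R n) 1
  have hbound : ∀ n : ℕ,
      (n : ℝ) * ∑ j ∈ Icc 1 (n / k n), (P (U n ∩ T^[j] ⁻¹' U n)).toReal
        ≤ (n * p n) ^ 2 / k n + 2 * (Cstar * (n * p n)) / r n := by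
    intro n
    have hsum := sum_Icc_le_of_eq_zero_of_le_add_div_sq
      (fun j => (P (U n ∩ T^[j] ⁻¹' U n)).toReal) (sq_nonneg (p n))
      (mul_nonneg hC.le ENNReal.toReal_nonneg) (le_max_right (R n) 1)
      (fun j hj hjr => by simp [hdisj n j hj (by omega)]) (hcorr n) (n / k n)
    calc (n : ℝ) * ∑ j ∈ Icc 1 (n / k n), (P (U n ∩ T^[j] ⁻¹' U n)).toReal
        ≤ n * ((n / k n : ℕ) * p n ^ 2 + 2 * (Cstar * p n) / r n) := by gcongr
      _ ≤ n * ((n : ℝ) / k n * p n ^ 2 + 2 * (Cstar * p n) / r n) := by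
          gcongr; exact Nat.cast_div_le
      _ = (n * p n) ^ 2 / k n + 2 * (Cstar * (n * p n)) / r n := by ring
  have hr : Tendsto r atTop atTop := tendsto_atTop_mono (fun n => le_max_left _ _) hR
  have hlim : Tendsto (fun n : ℕ => (n * p n) ^ 2 / k n + 2 * (Cstar * (n * p n)) / r n)
      atTop (nhds 0) := by
    simpa using ((hna.pow 2).div_atTop (tendsto_natCast_atTop_atTop.comp hk)).add
      (((hna.const_mul Cstar).const_mul 2).div_atTop (tendsto_natCast_atTop_atTop.comp hr))
  exact squeeze_zero (fun n => by positivity) hbound hlim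

/-- abstract form of the proof of condition D′(u_n) in Theorem A:
under the correlation bound P(U_n ∩ T^{-j}U_n) ≤ P(U_n)² + C*·P(U_n)·j^{-2}, with
nP(U_n) → τ > 0 and first return times R_n → ∞ (U_n ∩ T^{-j}U_n = ∅ for 1 ≤ j < R_n),
the D′ sum n Σ_{j=1}^{⌊n/k_n⌋} P(U_n ∩ T^{-j}U_n) tends to 0. -/
theorem Dprime_holds_of_decay
    {Ω : Type*} [MeasurableSpace Ω] (P : Measure Ω) [IsProbabilityMeasure P]
    (T : Ω → Ω) (hT : MeasurePreserving T P P)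
    (Cstar τ : ℝ) (hC : 0 < Cstar) (hτ : 0 < τ)
    (U : ℕ → Set Ω) (hUm : ∀ n, MeasurableSet (U n))
    (hna : Tendsto (fun n : ℕ => (n : ℝ) * (P (U n)).toReal) atTop (nhds τ))
    (hcorr : ∀ n j : ℕ, 1 ≤ j →
      (P (U n ∩ T^[j] ⁻¹' U n)).toReal
        ≤ (P (U n)).toReal ^ 2 + Cstar * (P (U n)).toReal / (j : ℝ) ^ 2)
    (R : ℕ → ℕ) (hR : Tendsto R atTop atTop)
    (hdisj : ∀ n j : ℕ, 1 ≤ j → j < R n → U n ∩ T^[j] ⁻¹' U n = ∅)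
    (k : ℕ → ℕ) (hkpos : ∀ n, 0 < k n) (hk : Tendsto k atTop atTop) :
    Tendsto (fun n : ℕ =>
        (n : ℝ) * ∑ j ∈ Finset.Icc 1 (n / k n), (P (U n ∩ T^[j] ⁻¹' U n)).toReal)
      atTop (nhds 0) :=
  Dprime_holds_of_decay_general P T Cstar τ hC U hna hcorr R hR hdisj k hk
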